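/- Let t : ℕ → ℕ be the sequence defined by t(1) = 1 and, for n ≥ 2, t(n) = Σ_{i=1}^{n−1} binom(n−2, i−1) · t(i) · t(n−i). Then t(n) = (n−1)! for all n ≥ 1. -/

import Mathlib

open Finset

/-- `(n - 1)!` solves the staircase-tree recurrence: each of its `n - 1` summands equals `(n - 2)!`. -/
theorem Nat.factorial_pred_eq_sum_choose_mul_factorial {n : ℕ} (hn : 2 ≤ n) :
    (n - 1).factorial =
      ∑ i ∈ Icc 1 (n - 1), (n - 2).choose (i - 1) * (i - 1).factorial * (n - i - 1).factorial := by
  have hterm : ∀ i ∈ Icc 1 (n - 1),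
      (n - 2).choose (i - 1) * (i - 1).factorial * (n - i - 1).factorial = (n - 2).factorial := by
    intro i hi
    obtain ⟨hi1, hi2⟩ := mem_Icc.mp hi
    rw [show n - i - 1 = n - 2 - (i - 1) by omega]
    exact Nat.choose_mul_factorial_mul_factorial (by omega)
  rw [sum_congr rfl hterm, sum_const, Nat.card_Icc, smul_eq_mul, Nat.add_sub_cancel,
    show n - 2 = n - 1 - 1 by omega, Nat.mul_factorial_pred (by omega)]

/-- If `t : ℕ → ℕ` satisfies `t(1) = 1` and, for `n ≥ 2`,
`t(n) = Σ_{i=1}^{n-1} binom(n-2, i-1)·t(i)·t(n-i)`, then `t(n) = (n-1)!` for all `n ≥ 1`. -/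
theorem staircase_tree_count (t : ℕ → ℕ) (h1 : t 1 = 1)
    (hrec : ∀ n, 2 ≤ n →
      t n = ∑ i ∈ Finset.Icc 1 (n - 1), Nat.choose (n - 2) (i - 1) * t i * t (n - i)) :
    ∀ n, 1 ≤ n → t n = (n - 1).factorial := by
  intro n
  induction n using Nat.strong_induction_on with
  | _ n ih =>
    intro hn
    obtain rfl | hn2 := eq_or_lt_of_le hn
    · exact h1
    rw [hrec n hn2, Nat.factorial_pred_eq_sum_choose_mul_factorial hn2]
    refine sum_congr rfl fun i hi => ?_
    obtain ⟨hi1, hi2⟩ := mem_Icc.mp hi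
    rw [ih i (by omega) hi1, ih (n - i) (by omega) (by omega)]
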